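/- arXiv:1012.5574 — 7 statements merged into one kernel-verified Lean document; each statement's English description precedes it below -/
import Mathlib

section
/- Let B=(b_{ij})_{i,j∈I} be a skew-symmetrizable integer matrix over a finite index set I, with diagonal matrix D=diag(d_i) (d_i positive integers) such that DB is skew-symmetric. Let c∈ℚ, let P=(p_{ij}) be a skew-symmetric rational matrix with PB=cD, fix k∈I, let B'=μ_k(B) and let P' be obtained from P by the Poisson-matrix exchange relation at k. Then P' is skew-symmetric and P'B'=cD. -/
open Matrix

/-- Matrix mutation `μ_k(B)` at index `k`:
`b'_{ij} = -b_{ij}` if `i = k` or `j = k`, and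
`b'_{ij} = b_{ij} + (|b_{ik}| b_{kj} + b_{ik} |b_{kj}|)/2` otherwise. -/
def matMut {I : Type*} [DecidableEq I] (B : Matrix I I ℚ) (k : I) : Matrix I I ℚ :=
  Matrix.of fun i j =>
    if i = k ∨ j = k then -B i j
    else B i j + (|B i k| * B k j + B i k * |B k j|) / 2

/-- The Poisson-matrix exchange relation at index `k`:
`p'_{ij} = -p_{ik} + Σ_{l : b_{lk} > 0} b_{lk} p_{il}` if `i ≠ j = k`;
`p'_{ij} = -p_{kj} + Σ_{l : b_{lk} > 0} b_{lk} p_{lj}` if `i = k ≠ j`;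
`p'_{ij} = p_{ij}` otherwise. -/
def poissonMut {I : Type*} [Fintype I] [DecidableEq I] (B P : Matrix I I ℚ) (k : I) :
    Matrix I I ℚ :=
  Matrix.of fun i j =>
    if i ≠ k ∧ j = k then -P i k + ∑ l, (if 0 < B l k then B l k * P i l else 0)
    else if i = k ∧ j ≠ k then -P k j + ∑ l, (if 0 < B l k then B l k * P l j else 0)
    else P i j

/-!
Let `E` be the identity matrix with column `k` replaced by `([b_{lk}]₊)_l - e_k` and `F` the
identity matrix with row `k` replaced by `([-b_{kj}]₊)_j - e_k`. Then `μ_k(B) = E B F`,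
`P' = Eᵀ P E` and `E² = 1`, while sign-coherence `[b_{jk}]₊ d_j = d_k [-b_{kj}]₊` gives
`Eᵀ D F = D`. Hence `P'` is skew-symmetric and `P' B' = Eᵀ P B F = c Eᵀ D F = c D`.
-/

namespace Matrix

variable {I R : Type*} [Fintype I]

theorem dotProduct_mulVec_self_eq_zero [CommRing R] [NoZeroDivisors R] [CharZero R]
    {P : Matrix I I R} (hP : Pᵀ = -P) (v : I → R) : v ⬝ᵥ P *ᵥ v = 0 := by
  have h : v ᵥ* P ⬝ᵥ v = -(v ⬝ᵥ P *ᵥ v) := by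
    rw [← mulVec_transpose, hP, neg_mulVec, neg_dotProduct, dotProduct_comm]
  rwa [← dotProduct_mulVec, self_eq_neg] at h

variable [DecidableEq I]

theorem updateCol_one_mul_apply [NonAssocSemiring R] (k : I) (v : I → R) (X : Matrix I I R)
    (i j : I) : (updateCol 1 k v * X) i j = (if i = k then 0 else X i j) + v i * X k j := by
  rw [mul_apply, ← Finset.add_sum_erase _ _ (Finset.mem_univ k), add_comm]
  simp only [updateCol_apply, one_apply]
  rw [Finset.sum_congr rfl fun l hl => by rw [if_neg (Finset.ne_of_mem_erase hl), ite_mul,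
    one_mul, zero_mul], Finset.sum_ite_eq]
  simp [Finset.mem_erase]

theorem mul_updateRow_one_apply [NonAssocSemiring R] (k : I) (w : I → R) (X : Matrix I I R)
    (i j : I) : (X * updateRow 1 k w) i j = (if j = k then 0 else X i j) + X i k * w j := by
  rw [mul_apply, ← Finset.add_sum_erase _ _ (Finset.mem_univ k), add_comm]
  simp only [updateRow_apply, one_apply]
  rw [Finset.sum_congr rfl fun l hl => by rw [if_neg (Finset.ne_of_mem_erase hl), mul_ite,
    mul_one, mul_zero], Finset.sum_ite_eq']
  simp [Finset.mem_erase]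

theorem updateCol_one_mul_self [Ring R] {k : I} {v : I → R} (hv : v k = -1) :
    updateCol 1 k v * updateCol 1 k v = 1 := by
  ext i j
  rw [updateCol_one_mul_apply]
  by_cases hj : j = k
  · subst hj
    by_cases hi : i = j <;> simp [one_apply, hi, hv]
  · by_cases hi : i = k <;> simp [one_apply, hi, hj, Ne.symm hj]

end Matrix

theorem abs_mul_add_mul_abs_div_two {K : Type*} [Field K] [LinearOrder K]
    [IsStrictOrderedRing K] (x y : K) :
    (|x| * y + x * |y|) / 2 = max x 0 * y + x * max (-y) 0 := by
  rcases le_total 0 x with hx | hx <;> rcases le_total 0 y with hy | hy <;>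
    simp [abs_of_nonneg, abs_of_nonpos, hx, hy]

theorem ite_pos_mul_eq_mul_max {K : Type*} [CommRing K] [LinearOrder K] (x y : K) :
    (if 0 < x then x * y else 0) = y * max x 0 := by
  split_ifs with hx
  · rw [max_eq_left hx.le, mul_comm]
  · rw [max_eq_right (not_lt.1 hx), mul_zero]

section Mutation

variable {I K : Type*} [DecidableEq I] [CommRing K] [LinearOrder K]

def mutationE (B : Matrix I I K) (k : I) : Matrix I I K :=
  updateCol 1 k ((fun l => max (B l k) 0) - Pi.single k 1)

def mutationF (B : Matrix I I K) (k : I) : Matrix I I K :=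
  updateRow 1 k ((fun j => max (-B k j) 0) - Pi.single k 1)

theorem transpose_mutationE (B : Matrix I I K) (k : I) :
    (mutationE B k)ᵀ = updateRow 1 k ((fun l => max (B l k) 0) - Pi.single k 1) := by
  rw [mutationE, ← updateRow_transpose, transpose_one]

theorem mutationE_mul_self [Fintype I] {B : Matrix I I K} {k : I} (hk : B k k ≤ 0) :
    mutationE B k * mutationE B k = 1 :=
  updateCol_one_mul_self (by simp [max_eq_right hk])

end Mutation

section SkewSymmetrizer

variable {I K : Type*} [Field K] [LinearOrder K] [IsStrictOrderedRing K]

structure IsSkewSymmetrizer (B : Matrix I I K) (d : I → K) : Prop where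
  pos : ∀ i, 0 < d i
  skew : ∀ i j, d i * B i j = -(d j * B j i)

variable {B : Matrix I I K} {d : I → K}

theorem IsSkewSymmetrizer.diag_eq_zero (hB : IsSkewSymmetrizer B d) (k : I) : B k k = 0 := by
  have h : d k * B k k = 0 := by linarith [hB.skew k k]
  exact (mul_eq_zero.1 h).resolve_left (hB.pos k).ne'

theorem IsSkewSymmetrizer.max_mul_eq_mul_max_neg (hB : IsSkewSymmetrizer B d) (j k : I) :
    max (B j k) 0 * d j = d k * max (-B k j) 0 := by
  rw [max_mul_of_nonneg _ _ (hB.pos j).le, mul_max_of_nonneg _ _ (hB.pos k).le, mul_comm (B j k),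
    hB.skew, zero_mul, mul_zero, mul_neg]

theorem transpose_mutationE_mul_diagonal_mul_mutationF [Fintype I] [DecidableEq I]
    (hB : IsSkewSymmetrizer B d) (k : I) :
    (mutationE B k)ᵀ * diagonal d * mutationF B k = diagonal d := by
  ext i j
  rw [transpose_mutationE, updateRow_mul, Matrix.one_mul, mutationF, mul_updateRow_one_apply]
  by_cases hi : i = k <;> by_cases hj : j = k
  · simp [hi, hj, vecMul_diagonal, hB.diag_eq_zero k]
  · simp [hi, hj, Ne.symm hj, vecMul_diagonal, hB.diag_eq_zero k, hB.max_mul_eq_mul_max_neg]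
  all_goals simp [updateRow_apply, diagonal_apply, hi, hj]

end SkewSymmetrizer

section PoissonMutation

variable {I : Type*} [Fintype I] [DecidableEq I]

theorem matMut_eq_mutationE_mul_mul_mutationF {B : Matrix I I ℚ} {k : I} (hk : B k k = 0) :
    matMut B k = mutationE B k * B * mutationF B k := by
  ext i j
  rw [Matrix.mul_assoc, mutationE, updateCol_one_mul_apply, mutationF, mul_updateRow_one_apply,
    mul_updateRow_one_apply]
  by_cases hi : i = k <;> by_cases hj : j = k <;>
    simp [matMut, hi, hj, hk, abs_mul_add_mul_abs_div_two]
  ring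

theorem poissonMut_eq_transpose_mutationE_mul_mul_mutationE (B : Matrix I I ℚ) {P : Matrix I I ℚ}
    (hP : Pᵀ = -P) (k : I) :
    poissonMut B P k = (mutationE B k)ᵀ * P * mutationE B k := by
  rw [transpose_mutationE, updateRow_mul, Matrix.one_mul, mutationE, mul_updateCol, Matrix.mul_one,
    updateRow_mulVec]
  have hPkk : P k k = 0 := self_eq_neg.1 (congr_fun₂ hP k k)
  ext i j
  by_cases hi : i = k <;> by_cases hj : j = k
  · subst hi hj
    rw [updateCol_self, Function.update_self, ← dotProduct_mulVec,
      dotProduct_mulVec_self_eq_zero hP]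
    simp [poissonMut, hPkk]
  all_goals simp [poissonMut, updateRow_apply, hi, hj, sub_vecMul, mulVec_sub, vecMul, mulVec,
    dotProduct, ite_pos_mul_eq_mul_max, mul_comm]
  all_goals ring

end PoissonMutation

/-- If `B` is skew-symmetrizable with skew-symmetrizer `D` (positive integer diagonal),
`P` is skew-symmetric with `PB = cD`, then the mutated Poisson matrix `P'` is
skew-symmetric and satisfies `P' B' = cD`, where `B' = μ_k(B)`. -/
theorem stmt0 {I : Type*} [Fintype I] [DecidableEq I]
    (B : Matrix I I ℤ) (d : I → ℤ) (hd : ∀ i, 0 < d i)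
    (hDB : ∀ i j, d i * B i j = -(d j * B j i))
    (c : ℚ) (P : Matrix I I ℚ) (hP : Pᵀ = -P) (k : I)
    (hPB : P * B.map ((↑) : ℤ → ℚ) = c • Matrix.diagonal fun i => (d i : ℚ)) :
    (poissonMut (B.map ((↑) : ℤ → ℚ)) P k)ᵀ = -(poissonMut (B.map ((↑) : ℤ → ℚ)) P k) ∧
    poissonMut (B.map ((↑) : ℤ → ℚ)) P k * matMut (B.map ((↑) : ℤ → ℚ)) k =
      c • Matrix.diagonal fun i => (d i : ℚ) := by
  set Q := B.map ((↑) : ℤ → ℚ)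
  have hQ : IsSkewSymmetrizer Q fun i => (d i : ℚ) :=
    ⟨fun i => mod_cast hd i, fun i j => by simp only [Q, map_apply]; exact_mod_cast hDB i j⟩
  have hQkk := hQ.diag_eq_zero k
  rw [poissonMut_eq_transpose_mutationE_mul_mul_mutationE Q hP,
    matMut_eq_mutationE_mul_mul_mutationF hQkk]
  set E := mutationE Q k
  refine ⟨by simp [transpose_mul, hP, Matrix.mul_assoc], ?_⟩
  calc Eᵀ * P * E * (E * Q * mutationF Q k)
      = Eᵀ * (P * (E * E) * Q) * mutationF Q k := by simp only [Matrix.mul_assoc]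
    _ = c • (Eᵀ * diagonal (fun i => (d i : ℚ)) * mutationF Q k) := by
      rw [mutationE_mul_self hQkk.le, Matrix.mul_one, hPB, Matrix.mul_smul, Matrix.smul_mul]
    _ = c • diagonal fun i => (d i : ℚ) := by
      rw [transpose_mutationE_mul_diagonal_mul_mutationF hQ]
end

section
/- Let B=(b_{ij})_{i,j∈I} be a skew-symmetrizable indecomposable integer matrix over a finite index set I with at least two elements, with diagonal matrix D=diag(d_i) (d_i positive integers) such that DB is skew-symmetric. Let P be a skew-symmetric rational matrix such that PB is a diagonal matrix. Suppose that for every k∈I, the matrix P'B' is diagonal, where B'=μ_k(B) and P' is obtained from P by the Poisson-matrix exchange relation at k. Then there exists c∈ℚ such that PB=cD. -/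
open Matrix

/-- Let `B` be a skew-symmetrizable indecomposable integer matrix over a finite index
set with at least two elements, with positive integer diagonal skew-symmetrizer `D`.
If `P` is skew-symmetric, `PB` is diagonal, and for every `k` the matrix `P' B'` is
diagonal (with `B' = μ_k(B)` and `P'` the exchanged Poisson matrix), then `PB = cD`
for some rational constant `c`. -/
theorem stmt1 {I : Type*} [Fintype I] [DecidableEq I]
    (hI : 1 < Fintype.card I)
    (B : Matrix I I ℤ) (d : I → ℤ) (hd : ∀ i, 0 < d i)
    (hDB : ∀ i j, d i * B i j = -(d j * B j i))
    (hind : ¬ ∃ s : Set I, s.Nonempty ∧ sᶜ.Nonempty ∧ ∀ i ∈ s, ∀ j ∈ sᶜ, B i j = 0)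
    (P : Matrix I I ℚ) (hP : Pᵀ = -P)
    (hdiag : ∀ i j, i ≠ j → (P * B.map ((↑) : ℤ → ℚ)) i j = 0)
    (hmut : ∀ k : I, ∀ i j, i ≠ j →
      (poissonMut (B.map ((↑) : ℤ → ℚ)) P k * matMut (B.map ((↑) : ℤ → ℚ)) k) i j = 0) :
    ∃ c : ℚ, P * B.map ((↑) : ℤ → ℚ) = c • Matrix.diagonal fun i => (d i : ℚ) := by
  classical
  set b : Matrix I I ℚ := B.map ((↑) : ℤ → ℚ) with hb
  have hbapp : ∀ i j, b i j = (B i j : ℚ) := fun i j => rfl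
  have hdQ : ∀ i, (0:ℚ) < (d i : ℚ) := fun i => by exact_mod_cast hd i
  have hskew : ∀ i j, (d i : ℚ) * b i j = -((d j : ℚ) * b j i) := by
    intro i j
    have h := hDB i j
    have : ((d i * B i j : ℤ) : ℚ) = ((-(d j * B j i) : ℤ) : ℚ) := by exact_mod_cast h
    push_cast at this
    simpa [hbapp] using this
  have hbkk : ∀ i, b i i = 0 := by
    intro i
    have h := hskew i i
    have hdi := hdQ i
    nlinarith
  have hPskew : ∀ i j, P i j = -P j i := by
    intro i j
    have := congrFun (congrFun hP j) i
    simpa [Matrix.transpose_apply] using this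
  have hPkk : ∀ i, P i i = 0 := by
    intro i
    have := hPskew i i
    linarith
  set lam : I → ℚ := fun i => (P * b) i i with hlam
  have hPb : ∀ m j, (P * b) m j = if m = j then lam j else 0 := by
    intro m j
    by_cases h : m = j
    · subst h; simp [hlam]
    · simp [h, hdiag m j h]
  have key : ∀ k j, j ≠ k → b k j < 0 → b j k * lam j + b k j * lam k = 0 := by
    intro k j hjk hneg
    have hjkpos : 0 < b j k := by
      have h1 := hskew k j
      have hdj := hdQ j; have hdk := hdQ k
      nlinarith
    have h0 := hmut k k j (fun h => hjk h.symm)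
    rw [Matrix.mul_apply] at h0
    set Q : I → ℚ := fun l => -P k l + ∑ m, (if 0 < b m k then b m k * P m l else 0) with hQ
    set g : I → ℚ := fun l => if b l k < 0 then -b l k else 0 with hg
    have hgk : g k = 0 := by simp [hg, hbkk k]
    -- rewrite of the two factors
    have hpfac : ∀ l, poissonMut b P k k l = Q l + (if l = k then -Q k else 0) := by
      intro l
      by_cases hl : l = k
      · subst hl
        simp [poissonMut, hPkk]
      · simp [poissonMut, hl, hQ]
    have hmfac : ∀ l, matMut b k l j =
        (b l j + b k j * g l) + (if l = k then -2 * b k j else 0) := by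
      intro l
      by_cases hl : l = k
      · subst hl
        simp [matMut, hgk]
        ring
      · have habs : |b k j| = -b k j := abs_of_neg hneg
        have hcond : ¬(l = k ∨ j = k) := by push_neg; exact ⟨hl, hjk⟩
        simp only [matMut, Matrix.of_apply, if_neg hcond, if_neg hl, hg]
        by_cases hs : b l k < 0
        · rw [if_pos hs, abs_of_neg hs, habs]; ring
        · rw [if_neg hs, abs_of_nonneg (not_lt.mp hs), habs]; ring
    -- pointwise product form
    have hpt : ∀ l, poissonMut b P k k l * matMut b k l j
        = Q l * (b l j + b k j * g l) +
          (if l = k then (-Q k * (b l j + b k j * g l)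
              + Q l * (-2 * b k j) + (-Q k) * (-2 * b k j)) else 0) := by
      intro l
      rw [hpfac l, hmfac l]
      split_ifs <;> ring
    rw [Finset.sum_congr rfl fun l _ => hpt l, Finset.sum_add_distrib,
      Finset.sum_ite_eq' Finset.univ k, if_pos (Finset.mem_univ k)] at h0
    -- first big sum splits
    have hsplit : ∀ l, Q l * (b l j + b k j * g l) = Q l * b l j + b k j * (Q l * g l) := by
      intro l; ring
    rw [Finset.sum_congr rfl fun l _ => hsplit l, Finset.sum_add_distrib,
      ← Finset.mul_sum] at h0
    -- e1 : ∑ l, Q l * b l j = b j k * lam j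
    have e1 : ∑ l, Q l * b l j = b j k * lam j := by
      have expand : ∀ l, Q l * b l j
          = -(P k l * b l j) + ∑ m, (if 0 < b m k then b m k * (P m l * b l j) else 0) := by
        intro l
        simp only [hQ, add_mul, Finset.sum_mul, ite_mul, zero_mul, neg_mul, mul_assoc]
      rw [Finset.sum_congr rfl fun l _ => expand l, Finset.sum_add_distrib]
      have p1 : ∑ l, -(P k l * b l j) = 0 := by
        rw [Finset.sum_neg_distrib, ← Matrix.mul_apply, hdiag k j (fun h => hjk h.symm), neg_zero]
      have p2 : ∑ l, ∑ m, (if 0 < b m k then b m k * (P m l * b l j) else 0)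
          = b j k * lam j := by
        rw [Finset.sum_comm]
        have inner : ∀ m, (∑ l, if 0 < b m k then b m k * (P m l * b l j) else 0)
            = (if m = j then (if 0 < b m k then b m k * lam j else 0) else 0) := by
          intro m
          by_cases hm : 0 < b m k
          · simp only [if_pos hm, ← Finset.mul_sum, ← Matrix.mul_apply, hPb m j]
            by_cases hmj : m = j
            · simp [hmj, hm]
            · simp [hmj]
          · simp [hm]
        rw [Finset.sum_congr rfl fun m _ => inner m,
          Finset.sum_ite_eq' Finset.univ j, if_pos (Finset.mem_univ j), if_pos hjkpos]
      rw [p1, p2, zero_add]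
    -- e2 : ∑ l, b l k * Q l = -lam k
    have e2 : ∑ l, b l k * Q l = -lam k := by
      have expand : ∀ l, b l k * Q l
          = -(P k l * b l k) + ∑ m, (if 0 < b m k then b m k * (P m l * b l k) else 0) := by
        intro l
        simp only [hQ, mul_add, mul_neg, Finset.mul_sum, mul_ite, mul_zero]
        congr 1
        · ring
        · exact Finset.sum_congr rfl fun m _ => by split_ifs <;> ring
      rw [Finset.sum_congr rfl fun l _ => expand l, Finset.sum_add_distrib]
      have p1 : ∑ l, -(P k l * b l k) = -lam k := by
        rw [Finset.sum_neg_distrib, ← Matrix.mul_apply]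
      have p2 : ∑ l, ∑ m, (if 0 < b m k then b m k * (P m l * b l k) else 0) = 0 := by
        rw [Finset.sum_comm]
        have inner : ∀ m, (∑ l, if 0 < b m k then b m k * (P m l * b l k) else 0) = 0 := by
          intro m
          by_cases hm : 0 < b m k
          · simp only [if_pos hm, ← Finset.mul_sum, ← Matrix.mul_apply, hPb m k]
            have hmk : m ≠ k := by
              rintro rfl; rw [hbkk m] at hm; exact lt_irrefl 0 hm
            simp [hmk]
          · simp [hm]
        rw [Finset.sum_congr rfl fun m _ => inner m, Finset.sum_const_zero]
      rw [p1, p2, add_zero]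
    -- e3 : ∑ l, (if 0 < b l k then b l k * Q l else 0) = Q k
    have e3 : ∑ l, (if 0 < b l k then b l k * Q l else 0) = Q k := by
      have expand : ∀ l, (if 0 < b l k then b l k * Q l else 0)
          = (if 0 < b l k then b l k * P l k else 0)
            + ∑ m, (if 0 < b l k then (if 0 < b m k then b l k * (b m k * P m l) else 0) else 0) := by
        intro l
        by_cases hl : 0 < b l k
        · simp only [if_pos hl, hQ, mul_add, mul_neg, Finset.mul_sum, mul_ite, mul_zero]
          rw [hPskew l k]
          congr 1
          ring
        · simp [hl]
      rw [Finset.sum_congr rfl fun l _ => expand l, Finset.sum_add_distrib]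
      have p2 : ∑ l, ∑ m, (if 0 < b l k then (if 0 < b m k then b l k * (b m k * P m l) else 0) else 0)
          = 0 := by
        set f : I → I → ℚ :=
          fun l m => if 0 < b l k then (if 0 < b m k then b l k * (b m k * P m l) else 0) else 0
          with hf
        have hanti : ∀ l m, f l m = -f m l := by
          intro l m
          simp only [hf]
          rw [hPskew m l]
          split_ifs <;> ring
        have hT : (∑ l, ∑ m, f l m) = -∑ l, ∑ m, f l m := by
          conv_lhs => rw [Finset.sum_comm]
          rw [Finset.sum_congr rfl fun m _ => Finset.sum_congr rfl fun l _ => hanti l m]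
          simp [Finset.sum_neg_distrib]
        have := hT
        linarith
      have p1 : ∑ l, (if 0 < b l k then b l k * P l k else 0) = Q k := by
        simp [hQ, hPkk k]
      rw [p1, p2, add_zero]
    -- e4 : ∑ l, Q l * g l = lam k + Q k
    have e4 : ∑ l, Q l * g l = lam k + Q k := by
      have expand : ∀ l, Q l * g l = -(if b l k < 0 then b l k * Q l else 0) := by
        intro l
        simp only [hg, mul_ite, mul_zero]
        split_ifs <;> ring
      rw [Finset.sum_congr rfl fun l _ => expand l, Finset.sum_neg_distrib]
      have tri : ∀ l, (if b l k < 0 then b l k * Q l else 0)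
          = b l k * Q l - (if 0 < b l k then b l k * Q l else 0) := by
        intro l
        rcases lt_trichotomy (b l k) 0 with h | h | h
        · rw [if_pos h, if_neg (by linarith)]; ring
        · rw [if_neg (by rw [h]; exact lt_irrefl 0), if_neg (by rw [h]; exact lt_irrefl 0), h]
          ring
        · rw [if_neg (by linarith), if_pos h]; ring
      rw [Finset.sum_congr rfl fun l _ => tri l, Finset.sum_sub_distrib, e2, e3]
      ring
    rw [e1, e4, hgk] at h0
    -- h0 now gives the claim
    nlinarith [h0]
  -- proportionality along edges
  have hprop : ∀ k j, b k j ≠ 0 → lam k * (d j : ℚ) = lam j * (d k : ℚ) := by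
    intro k j hne
    have hkj : k ≠ j := by rintro rfl; exact hne (hbkk k)
    have h2 := hskew k j
    have hdj := hdQ j; have hdk := hdQ k
    have h1 : b j k * lam j + b k j * lam k = 0 := by
      rcases lt_trichotomy (b k j) 0 with h | h | h
      · exact key k j (Ne.symm hkj) h
      · exact absurd h hne
      · have hbjk : b j k < 0 := by nlinarith
        have := key j k hkj hbjk
        linarith
    have h3 : b k j * ((d j : ℚ) * lam k - (d k : ℚ) * lam j) = 0 := by
      linear_combination (d j : ℚ) * h1 - lam j * h2
    rcases mul_eq_zero.mp h3 with h | h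
    · exact absurd h hne
    · linarith
  -- connectivity: lam i / d i is constant
  have : Nonempty I := Fintype.card_pos_iff.mp (by omega)
  obtain ⟨i₀⟩ := this
  have hconst : ∀ i, lam i * (d i₀ : ℚ) = lam i₀ * (d i : ℚ) := by
    by_contra hcon
    push_neg at hcon
    obtain ⟨i₁, hi₁⟩ := hcon
    apply hind
    refine ⟨{i | lam i * (d i₀ : ℚ) = lam i₀ * (d i : ℚ)}, ⟨i₀, rfl⟩, ⟨i₁, hi₁⟩, ?_⟩
    intro i hi j hj
    by_contra hBij
    apply hj
    have hbij : b i j ≠ 0 := by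
      simp only [hbapp]
      exact_mod_cast hBij
    have h1 := hprop i j hbij
    have hdi : (d i : ℚ) ≠ 0 := ne_of_gt (hdQ i)
    have : (d i : ℚ) * (lam j * (d i₀ : ℚ)) = (d i : ℚ) * (lam i₀ * (d j : ℚ)) := by
      have hi' : lam i * (d i₀ : ℚ) = lam i₀ * (d i : ℚ) := hi
      linear_combination (d j : ℚ) * hi' - (d i₀ : ℚ) * h1
    exact mul_left_cancel₀ hdi this
  refine ⟨lam i₀ / (d i₀ : ℚ), ?_⟩
  ext i j
  by_cases hij : i = j
  · subst hij
    have hd0 : (d i₀ : ℚ) ≠ 0 := ne_of_gt (hdQ i₀)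
    simp only [Matrix.smul_apply, Matrix.diagonal_apply_eq, smul_eq_mul]
    rw [show (P * b) i i = lam i from rfl]
    field_simp
    linear_combination hconst i
  · simp [hdiag i j hij, Matrix.diagonal_apply_ne _ hij, hij]
end

section
/- Let I be a finite index set, B a skew-symmetrizable integer matrix over I with diagonal matrix D=diag(d_i) (d_i positive integers) such that DB is skew-symmetric, c_x∈ℚ, c_y∈ℚ with c_y≠0, and P a skew-symmetric rational matrix with PB=c_x D. Define the block matrices 𝒫 = [[P, c_y D],[−c_y D, c_y DB]] and 𝒲 = [[B D^{−1}, −D^{−1}],[D^{−1}, c_y^{−1} D^{−1} P D^{−1}]]. Then 𝒫𝒲 = (c_x + c_y)·𝕀, the identity matrix of size 2|I|. -/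
open Matrix

/-- With `B` skew-symmetrizable (skew-symmetrizer `D = diag(d_i)`, `d_i` positive
integers), `c_x, c_y ∈ ℚ`, `c_y ≠ 0`, and `P` skew-symmetric with `PB = c_x D`, the
block matrices `𝒫 = [[P, c_y D], [-c_y D, c_y D B]]` and
`𝒲 = [[B D⁻¹, -D⁻¹], [D⁻¹, c_y⁻¹ D⁻¹ P D⁻¹]]` satisfy `𝒫 𝒲 = (c_x + c_y) 𝕀`. -/
theorem stmt8 {I : Type*} [Fintype I] [DecidableEq I]
    (B : Matrix I I ℤ) (d : I → ℤ) (hd : ∀ i, 0 < d i)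
    (hDB : ∀ i j, d i * B i j = -(d j * B j i))
    (cx cy : ℚ) (hcy : cy ≠ 0)
    (P : Matrix I I ℚ) (hP : Pᵀ = -P)
    (hPB : P * B.map ((↑) : ℤ → ℚ) = cx • Matrix.diagonal fun i => (d i : ℚ)) :
    Matrix.fromBlocks
        P
        (cy • Matrix.diagonal fun i => (d i : ℚ))
        (-(cy • Matrix.diagonal fun i => (d i : ℚ)))
        (cy • (Matrix.diagonal (fun i => (d i : ℚ)) * B.map ((↑) : ℤ → ℚ))) *
      Matrix.fromBlocks
        (B.map ((↑) : ℤ → ℚ) * Matrix.diagonal fun i => (d i : ℚ)⁻¹)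
        (-(Matrix.diagonal fun i => (d i : ℚ)⁻¹))
        (Matrix.diagonal fun i => (d i : ℚ)⁻¹)
        (cy⁻¹ • (Matrix.diagonal (fun i => (d i : ℚ)⁻¹) * P *
          Matrix.diagonal fun i => (d i : ℚ)⁻¹)) =
      (cx + cy) • (1 : Matrix (I ⊕ I) (I ⊕ I) ℚ) := by

  set Bq := B.map ((↑) : ℤ → ℚ) with hBq
  set D := Matrix.diagonal fun i => (d i : ℚ) with hDdef
  set Dinv := Matrix.diagonal fun i => (d i : ℚ)⁻¹ with hDinvdef
  have hdne : ∀ i, (d i : ℚ) ≠ 0 := fun i => by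
    exact_mod_cast (hd i).ne'
  have hDDinv : D * Dinv = 1 := by
    rw [hDdef, hDinvdef, Matrix.diagonal_mul_diagonal]
    convert Matrix.diagonal_one with i
    exact mul_inv_cancel₀ (hdne i)
  have hDinvD : Dinv * D = 1 := by
    rw [hDdef, hDinvdef, Matrix.diagonal_mul_diagonal]
    convert Matrix.diagonal_one with i
    exact inv_mul_cancel₀ (hdne i)
  have hskew : D * Bq = -(Bqᵀ * D) := by
    ext i j
    simp only [hDdef, hBq, Matrix.diagonal_mul, Matrix.mul_diagonal, Matrix.neg_apply,
      Matrix.transpose_apply, Matrix.map_apply]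
    rw [mul_comm ((B j i : ℚ)) ((d j : ℚ))]
    exact_mod_cast hDB i j
  have hDT : Dᵀ = D := by rw [hDdef]; exact Matrix.diagonal_transpose _
  have hBtP : -(Bqᵀ * P) = cx • D := by
    have := congrArg Matrix.transpose hPB
    rw [Matrix.transpose_mul, hP, Matrix.transpose_smul, hDT, Matrix.mul_neg] at this
    exact this
  rw [Matrix.fromBlocks_multiply]
  have hTL : P * (Bq * Dinv) + cy • D * Dinv = (cx + cy) • 1 := by
    rw [← Matrix.mul_assoc, hPB, Matrix.smul_mul, Matrix.smul_mul, hDDinv, add_smul]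
  have hTR : P * -Dinv + cy • D * (cy⁻¹ • (Dinv * P * Dinv)) = 0 := by
    rw [Matrix.smul_mul, Matrix.mul_smul, smul_smul, mul_inv_cancel₀ hcy, one_smul,
      show Dinv * P * Dinv = Dinv * (P * Dinv) from Matrix.mul_assoc _ _ _,
      ← Matrix.mul_assoc, hDDinv, Matrix.one_mul, Matrix.mul_neg]
    exact neg_add_cancel _
  have hBL : -(cy • D) * (Bq * Dinv) + cy • (D * Bq) * Dinv = 0 := by
    rw [Matrix.neg_mul, Matrix.smul_mul, Matrix.smul_mul, ← Matrix.mul_assoc]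
    exact neg_add_cancel _
  have hBR : -(cy • D) * -Dinv + cy • (D * Bq) * (cy⁻¹ • (Dinv * P * Dinv)) =
      (cx + cy) • 1 := by
    rw [Matrix.neg_mul, Matrix.mul_neg, neg_neg, Matrix.smul_mul, hDDinv,
      Matrix.smul_mul, Matrix.mul_smul, smul_smul, mul_inv_cancel₀ hcy, one_smul, hskew,
      Matrix.neg_mul, Matrix.mul_assoc Bqᵀ D _, ← Matrix.mul_assoc D (Dinv * P) Dinv,
      ← Matrix.mul_assoc D Dinv P, hDDinv, Matrix.one_mul, ← Matrix.mul_assoc,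
      ← Matrix.neg_mul, hBtP, Matrix.smul_mul, hDDinv, add_smul, add_comm]
  rw [hTL, hTR, hBL, hBR, show (0:Matrix I I ℚ) = (cx+cy) • 0 from (smul_zero _).symm,
    ← Matrix.fromBlocks_smul, Matrix.fromBlocks_one]
end

section
/- Let B=(b_{ij})_{i,j∈ℤ} be the discrete Lotka–Volterra exchange matrix and let P=(p_{ij})_{i,j∈ℤ} be a skew-symmetric rational matrix with PB=O (entrywise finite sums). Then P satisfies both (a) p_{i+3,j+3}=p_{ij} for all i,j∈ℤ, and (b) μ_{0̄}(P)_{ij} = p_{i−1,j−1} for all i,j∈ℤ, if and only if there exist a₀∈ℚ and a map q:ℤ→ℚ with q(0)=0 and q(−n)=−q(n) for all n, such that p_{3i+k,3j+l} = q(j−i) + (l−k)·a₀ for all i,j∈ℤ and k,l∈{0,1,2}. -/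
/-- The discrete Lotka–Volterra exchange matrix `B = (b_{ij})_{i,j ∈ ℤ}`. -/
def lvB (i j : ℤ) : ℤ :=
  if i % 3 = 0 then
    (if j - i = 1 then 1 else 0) + (if j - i = -1 then 1 else 0)
      - (if j - i = 2 then 1 else 0) - (if j - i = -2 then 1 else 0)
  else if i % 3 = 1 then
    (if j - i = 1 then 1 else 0) + (if j - i = 2 then 1 else 0)
      + (if j - i = -3 then 1 else 0) - (if j - i = -1 then 1 else 0)
      - (if j - i = -2 then 1 else 0) - (if j - i = 3 then 1 else 0)
  else
    -(if j - i = 1 then 1 else 0) - (if j - i = -1 then 1 else 0)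
      + (if j - i = 2 then 1 else 0) + (if j - i = -2 then 1 else 0)

/-- The composite Poisson-matrix mutation `μ_{0̄}` at all points of `3ℤ`, written
entrywise: `p'_{ij} = p_{ij}` if `i, j ∉ 3ℤ`;
`p'_{i,3b} = -p_{i,3b} + p_{i,3b-2} + p_{i,3b+2}` if `i ∉ 3ℤ`;
`p'_{3a,j} = -p_{3a,j} + p_{3a-2,j} + p_{3a+2,j}` if `j ∉ 3ℤ`; and
`p'_{3a,3b} = Σ_{ε,ε' ∈ {-2,0,2}} s(ε) s(ε') p_{3a+ε,3b+ε'}` with `s(0) = -1`,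
`s(±2) = 1`. -/
def lvMut0 (P : ℤ → ℤ → ℚ) (i j : ℤ) : ℚ :=
  if i % 3 = 0 then
    if j % 3 = 0 then
      P (i-2) (j-2) - P (i-2) j + P (i-2) (j+2)
        - P i (j-2) + P i j - P i (j+2)
        + P (i+2) (j-2) - P (i+2) j + P (i+2) (j+2)
    else -P i j + P (i-2) j + P (i+2) j
  else
    if j % 3 = 0 then -P i j + P i (j-2) + P i (j+2)
    else P i j

/-!
Along each row of `P`, the equations `(PB)_{ij} = 0` for `j ∉ 1 + 3ℤ` read
`p_{i,j-2} + p_{i,j+2} = p_{i,j-1} + p_{i,j+1}`; they force every 3-block of a row to be a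
translate of its first block. Off `3ℤ` the mutation condition (b) says `p_{ij} = p_{i-1,j-1}`,
which ties rows `0, 1, 2` together; with skew-symmetry and a single instance of (b) at a point
of `3ℤ` this gives `p_{k,3d+l} = p_{0,3d} + (l - k) p_{01}`, and periodicity (a) moves this to
all block rows. Conversely, a matrix of the stated form is checked directly against (a) and (b)
after writing each index as `3 ⌊x/3⌋ + (x mod 3)`.
-/

open Function

section ExchangeMatrix

lemma lvB_eq_zero_of_mod_ne_one {l j : ℤ} (hj : j % 3 ≠ 1)
    (hl : l ∉ ({j - 2, j - 1, j + 1, j + 2} : Finset ℤ)) : lvB l j = 0 := by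
  simp only [Finset.mem_insert, Finset.mem_singleton, not_or] at hl
  unfold lvB
  split_ifs <;> omega

lemma lvB_column_of_mod_ne_one {j : ℤ} (hj : j % 3 ≠ 1) :
    ∃ s : ℤ, (s = 1 ∨ s = -1) ∧
      lvB (j - 2) j = s ∧ lvB (j - 1) j = -s ∧ lvB (j + 1) j = -s ∧ lvB (j + 2) j = s := by
  rcases (by omega : j % 3 = 0 ∨ j % 3 = 2) with h | h
  · refine ⟨1, .inl rfl, ?_, ?_, ?_, ?_⟩ <;> unfold lvB <;> split_ifs <;> omega
  · refine ⟨-1, .inr rfl, ?_, ?_, ?_, ?_⟩ <;> unfold lvB <;> split_ifs <;> omega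

lemma add_eq_add_of_finsum_mul_lvB_eq_zero {f : ℤ → ℚ} {j : ℤ} (hj : j % 3 ≠ 1)
    (hf : ∑ᶠ l, f l * lvB l j = 0) : f (j - 2) + f (j + 2) = f (j - 1) + f (j + 1) := by
  rw [finsum_eq_sum_of_support_subset (s := {j - 2, j - 1, j + 1, j + 2}) _ fun l hl => by
    by_contra h
    exact hl (by simp [lvB_eq_zero_of_mod_ne_one hj h])] at hf
  rw [Finset.sum_insert (by simp; omega), Finset.sum_insert (by simp; omega),
    Finset.sum_pair (by omega)] at hf
  obtain ⟨s, hs, h₁, h₂, h₃, h₄⟩ := lvB_column_of_mod_ne_one hj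
  simp only [h₁, h₂, h₃, h₄, Int.cast_neg] at hf
  rcases hs with rfl | rfl <;> push_cast at hf <;> linarith

lemma apply_three_mul_add_of_add_eq_add {f : ℤ → ℚ}
    (hf : ∀ j, j % 3 ≠ 1 → f (j - 2) + f (j + 2) = f (j - 1) + f (j + 1)) (d : ℤ) (l : Fin 3) :
    f (3 * d + l) = f (3 * d) + (f l - f 0) := by
  have h₁ : Periodic (fun d => f (3 * d + 1) - f (3 * d)) 1 := fun d => by
    have := hf (3 * d + 2) (by omega)
    ring_nf at this ⊢
    linarith
  have h₂ : Periodic (fun d => f (3 * d + 2) - f (3 * d + 1)) 1 := fun d => by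
    have := hf (3 * d + 3) (by omega)
    ring_nf at this ⊢
    linarith
  have e₁ := h₁.int_mul_eq d
  have e₂ := h₂.int_mul_eq d
  simp only [mul_one, mul_zero, zero_add, Int.cast_id] at e₁ e₂
  fin_cases l <;> simp <;> linarith

end ExchangeMatrix

section Forward

variable {P : ℤ → ℤ → ℚ}

lemma apply_three_mul_add (ha : ∀ i j, P (i + 3) (j + 3) = P i j) (n i j : ℤ) :
    P (3 * n + i) (3 * n + j) = P i j := by
  have : Periodic (fun t => P (t + i) (t + j)) 3 := fun t => by
    simpa only [add_right_comm] using ha (t + i) (t + j)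
  simpa only [mul_comm, zero_add, Int.cast_id] using this.int_mul_eq n

lemma apply_sub_one_sub_one_of_lvMut0 (hb : ∀ i j, lvMut0 P i j = P (i - 1) (j - 1))
    {i j : ℤ} (hi : i % 3 ≠ 0) (hj : j % 3 ≠ 0) : P i j = P (i - 1) (j - 1) := by
  simpa [lvMut0, hi, hj] using hb i j

variable (hP : ∀ i j, P j i = -P i j) (hPB : ∀ i j, ∑ᶠ l, P i l * (lvB l j : ℚ) = 0)
  (hb : ∀ i j, lvMut0 P i j = P (i - 1) (j - 1))
include hPB

lemma row_apply_three_mul_add (i d : ℤ) (l : Fin 3) :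
    P i (3 * d + l) = P i (3 * d) + (P i l - P i 0) :=
  apply_three_mul_add_of_add_eq_add
    (fun _ hj => add_eq_add_of_finsum_mul_lvB_eq_zero hj (hPB i _)) d l

include hP hb

lemma initial_block (k l : Fin 3) : P k l = ((l : ℚ) - k) * P 0 1 := by
  have hdiag {i j : ℤ} (hi : i % 3 ≠ 0) (hj : j % 3 ≠ 0) :=
    apply_sub_one_sub_one_of_lvMut0 hb hi hj
  have p00 : P 0 0 = 0 := by linarith [hP 0 0]
  have p11 : P 1 1 = 0 := by simpa [p00] using hdiag (i := 1) (j := 1) (by decide) (by decide)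
  have p12 : P 1 2 = P 0 1 := hdiag (i := 1) (j := 2) (by decide) (by decide)
  have p21 : P 2 1 = P 1 0 := hdiag (i := 2) (j := 1) (by decide) (by decide)
  have p22 : P 2 2 = P 1 1 := hdiag (i := 2) (j := 2) (by decide) (by decide)
  -- `(b)` at `(1, 0)`, with `p_{1,-2} = p_{0,-3}` and `p_{0,-1} - p_{0,-3} = p_{02}`
  have p02 : P 0 2 = 2 * P 0 1 := by
    have h := hb 1 0
    have h₁ : P 1 (-2) = P 0 (-3) := hdiag (i := 1) (j := -2) (by decide) (by decide)
    have h₂ := row_apply_three_mul_add hPB 0 (-1) 2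
    norm_num [lvMut0] at h h₂
    linarith [hP 0 1]
  fin_cases k <;> fin_cases l <;> norm_num <;> linarith [hP 0 1, hP 0 2]

lemma first_column_apply (k : Fin 3) (d : ℤ) : P k (3 * d) = P 0 (3 * d) - k * P 0 1 := by
  have hdiag {i j : ℤ} (hi : i % 3 ≠ 0) (hj : j % 3 ≠ 0) :=
    apply_sub_one_sub_one_of_lvMut0 hb hi hj
  have h₁ : P 1 (3 * d + 1) = P 0 (3 * d) := by
    simpa using hdiag (i := 1) (j := 3 * d + 1) (by decide) (by omega)
  have h₂ : P 2 (3 * d + 1) = P 1 (3 * d) := by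
    simpa using hdiag (i := 2) (j := 3 * d + 1) (by decide) (by omega)
  have r₁ := row_apply_three_mul_add hPB 1 d 1
  have r₂ := row_apply_three_mul_add hPB 2 d 1
  have b₁ := initial_block hP hPB hb 1 1
  have b₂ := initial_block hP hPB hb 1 0
  have b₃ := initial_block hP hPB hb 2 1
  have b₄ := initial_block hP hPB hb 2 0
  fin_cases k <;> norm_num at * <;> linarith

lemma apply_block_of_lvMut0 (k l : Fin 3) (d : ℤ) :
    P k (3 * d + l) = P 0 (3 * d) + ((l : ℚ) - k) * P 0 1 := by
  have hk0 : P k 0 = -k * P 0 1 := by simpa using initial_block hP hPB hb k 0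
  rw [row_apply_three_mul_add hPB, first_column_apply hP hPB hb, initial_block hP hPB hb, hk0]
  ring

end Forward

section Backward

lemma exists_eq_three_mul_add (i : ℤ) : ∃ a, i = 3 * a ∨ i = 3 * a + 1 ∨ i = 3 * a + 2 :=
  ⟨i / 3, by omega⟩

/-- The matrix `p_{3i+k,3j+l} = q(j - i) + (l - k) a₀`, written with `x = 3 ⌊x/3⌋ + (x mod 3)`. -/
def blockMatrix (a₀ : ℚ) (q : ℤ → ℚ) (x y : ℤ) : ℚ :=
  q (y / 3 - x / 3) + (((y % 3 : ℤ) : ℚ) - ((x % 3 : ℤ) : ℚ)) * a₀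

variable (a₀ : ℚ) (q : ℤ → ℚ)

lemma eq_blockMatrix {P : ℤ → ℤ → ℚ} (hP : ∀ (i j : ℤ) (k l : Fin 3),
      P (3 * i + ((k : ℕ) : ℤ)) (3 * j + ((l : ℕ) : ℤ)) =
        q (j - i) + (((l : ℕ) : ℚ) - ((k : ℕ) : ℚ)) * a₀) :
    P = blockMatrix a₀ q := by
  ext x y
  have h := hP (x / 3) (y / 3) ⟨(x % 3).toNat, by omega⟩ ⟨(y % 3).toNat, by omega⟩
  simp only [← Int.cast_natCast (R := ℚ), Int.toNat_of_nonneg (Int.emod_nonneg _ three_ne_zero),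
    Int.mul_ediv_add_emod] at h
  rw [h, blockMatrix]

lemma blockMatrix_add_three (i j : ℤ) :
    blockMatrix a₀ q (i + 3) (j + 3) = blockMatrix a₀ q i j := by
  simp only [blockMatrix, Int.add_ediv_of_dvd_right (dvd_refl 3), Int.add_emod_right]
  norm_num

lemma lvMut0_blockMatrix (i j : ℤ) :
    lvMut0 (blockMatrix a₀ q) i j = blockMatrix a₀ q (i - 1) (j - 1) := by
  obtain ⟨a, rfl | rfl | rfl⟩ := exists_eq_three_mul_add i <;>
  obtain ⟨b, rfl | rfl | rfl⟩ := exists_eq_three_mul_add j <;>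
  simp only [lvMut0, blockMatrix] <;> ring_nf <;>
  simp [Int.add_mul_ediv_right, Int.add_mul_emod_self_right] <;> ring_nf

end Backward

/-- A skew-symmetric rational matrix `P` with `PB = O` (for the discrete
Lotka–Volterra exchange matrix `B`) satisfies both (a) `p_{i+3,j+3} = p_{ij}` and
(b) `μ_{0̄}(P)_{ij} = p_{i-1,j-1}`, if and only if there exist `a₀ ∈ ℚ` and
`q : ℤ → ℚ` with `q 0 = 0`, `q (-n) = -q n`, such that
`p_{3i+k,3j+l} = q (j - i) + (l - k) a₀` for all `i, j ∈ ℤ`, `k, l ∈ {0,1,2}`. -/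
theorem stmt10 (P : ℤ → ℤ → ℚ) (hP : ∀ i j, P j i = -P i j)
    (hPB : ∀ i j, ∑ᶠ l, P i l * (lvB l j : ℚ) = 0) :
    ((∀ i j, P (i + 3) (j + 3) = P i j) ∧ (∀ i j, lvMut0 P i j = P (i - 1) (j - 1))) ↔
    ∃ (a₀ : ℚ) (q : ℤ → ℚ), q 0 = 0 ∧ (∀ n, q (-n) = -q n) ∧
      ∀ (i j : ℤ) (k l : Fin 3),
        P (3 * i + ((k : ℕ) : ℤ)) (3 * j + ((l : ℕ) : ℤ)) =
          q (j - i) + (((l : ℕ) : ℚ) - ((k : ℕ) : ℚ)) * a₀ := by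
  constructor
  · rintro ⟨ha, hb⟩
    refine ⟨P 0 1, fun n => P 0 (3 * n), by simpa using initial_block hP hPB hb 0 0,
      fun n => ?_, fun i j k l => ?_⟩
    · calc P 0 (3 * -n) = P (3 * n) 0 := by simpa using (apply_three_mul_add ha n 0 (3 * -n)).symm
        _ = -P 0 (3 * n) := hP 0 (3 * n)
    · calc P (3 * i + k) (3 * j + l) = P (3 * i + k) (3 * i + (3 * (j - i) + l)) := by ring_nf
        _ = P 0 (3 * (j - i)) + ((l : ℚ) - k) * P 0 1 := by
          rw [apply_three_mul_add ha, apply_block_of_lvMut0 hP hPB hb]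
  · rintro ⟨a₀, q, -, -, hform⟩
    obtain rfl := eq_blockMatrix a₀ q hform
    exact ⟨blockMatrix_add_three a₀ q, lvMut0_blockMatrix a₀ q⟩
end

section
/- Fix an integer m>2, let B̄ be the periodic discrete Lotka–Volterra exchange matrix of size 3m, and let P̄=(p_{ij})_{i,j∈ℤ/3mℤ} be a skew-symmetric rational matrix with P̄B̄=O. Then P̄ satisfies both (a) p_{i+3,j+3}=p_{ij} for all i,j, and (b) μ_{0̄}(P̄)_{ij}=p_{i−1,j−1} for all i,j, if and only if there exist a₀∈ℚ and a map q:ℤ/mℤ→ℚ with q(0)=0 and q(−n)=−q(n), such that p_{3i+k,3j+l} = q(j−i) + (l−k)·a₀ for all i,j∈ℤ/mℤ and k,l∈{0,1,2}. -/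
/-- The periodic discrete Lotka–Volterra exchange matrix of size `3m`, indexed by
`ℤ/3mℤ`; indices are read mod `3m`, and the congruence class of the row index mod `3`
is detected via the natural projection `ℤ/3mℤ → ℤ/3ℤ`. -/
def lvBbar (m : ℕ) (i j : ZMod (3 * m)) : ℤ :=
  if ZMod.castHom (dvd_mul_right 3 m) (ZMod 3) i = 0 then
    (if j - i = 1 then 1 else 0) + (if j - i = -1 then 1 else 0)
      - (if j - i = 2 then 1 else 0) - (if j - i = -2 then 1 else 0)
  else if ZMod.castHom (dvd_mul_right 3 m) (ZMod 3) i = 1 then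
    (if j - i = 1 then 1 else 0) + (if j - i = 2 then 1 else 0)
      + (if j - i = -3 then 1 else 0) - (if j - i = -1 then 1 else 0)
      - (if j - i = -2 then 1 else 0) - (if j - i = 3 then 1 else 0)
  else
    -(if j - i = 1 then 1 else 0) - (if j - i = -1 then 1 else 0)
      + (if j - i = 2 then 1 else 0) + (if j - i = -2 then 1 else 0)

/-- The composite Poisson-matrix mutation `μ_{0̄}` at all points `≡ 0 (mod 3)` of
`ℤ/3mℤ`, written entrywise: `p'_{ij} = p_{ij}` if neither `i` nor `j` is `≡ 0 mod 3`;
`p'_{i,3b} = -p_{i,3b} + p_{i,3b-2} + p_{i,3b+2}` if `i ≢ 0`;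
`p'_{3a,j} = -p_{3a,j} + p_{3a-2,j} + p_{3a+2,j}` if `j ≢ 0`; and
`p'_{3a,3b} = Σ_{ε,ε' ∈ {-2,0,2}} s(ε) s(ε') p_{3a+ε,3b+ε'}`, `s(0) = -1`, `s(±2) = 1`. -/
def lvMut0bar (m : ℕ) (P : ZMod (3 * m) → ZMod (3 * m) → ℚ) (i j : ZMod (3 * m)) : ℚ :=
  if ZMod.castHom (dvd_mul_right 3 m) (ZMod 3) i = 0 then
    if ZMod.castHom (dvd_mul_right 3 m) (ZMod 3) j = 0 then
      P (i-2) (j-2) - P (i-2) j + P (i-2) (j+2)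
        - P i (j-2) + P i j - P i (j+2)
        + P (i+2) (j-2) - P (i+2) j + P (i+2) (j+2)
    else -P i j + P (i-2) j + P (i+2) j
  else
    if ZMod.castHom (dvd_mul_right 3 m) (ZMod 3) j = 0 then
      -P i j + P i (j-2) + P i (j+2)
    else P i j

/-!
Write `G u v = p_{uv}` for integer indices `u, v`. With `u = 3i + k` and `v = 3j + l` the claimed
form reads `G u v = R (⌊v/3⌋ - ⌊u/3⌋) + (v - u) a₀`, where `R n = q n - 3 n a₀`, and in this shape
the shift invariance and the mutation identity are direct computations with `⌊·/3⌋`.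

Conversely, the column of `P̄ B̄ = O` at an index `≡ 2 (mod 3)` says that
`G u (3d+1) - G u (3d)` does not depend on `d`; let `a₀` be its value for `u = 0`. The mutation
identity at indices `≢ 0 (mod 3)` relates rows `1` and `2` to row `0`, skew-symmetry with
`3`-periodicity gives `G 1 (3d)` and later `G 0 (3d+2)`, and the mutation identity at a row `≡ 0`
gives `G 2 (3d) = G 0 (3d) - 2a₀`. Then `q n = G 0 (3n)` is odd and well defined modulo `m`.
-/

open Function

section Transport

variable {m : ℕ}

local notation "π₃" => ZMod.castHom (dvd_mul_right 3 _) (ZMod 3)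

theorem castHom_three_intCast_eq_zero_iff (u : ℤ) : π₃ (u : ZMod (3 * m)) = 0 ↔ 3 ∣ u := by
  rw [map_intCast, ZMod.intCast_zmod_eq_zero_iff_dvd]
  norm_cast

theorem castHom_three_intCast_of_emod_eq_two {u : ℤ} (hu : u % 3 = 2) :
    π₃ (u : ZMod (3 * m)) = 2 := by
  rw [map_intCast, ← ZMod.intCast_mod]
  simp [hu]

theorem intCast_three_mul_eq_of_intCast_eq {a b : ℤ} (h : (a : ZMod m) = b) :
    ((3 * a : ℤ) : ZMod (3 * m)) = ((3 * b : ℤ) : ZMod (3 * m)) := by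
  rw [ZMod.intCast_eq_intCast_iff_dvd_sub] at h ⊢
  push_cast
  rw [← mul_sub]
  exact mul_dvd_mul_left 3 h

-- Every entry of the column other than `t = ±1, ±2` is excluded by the residue of `t` mod `3`.
theorem lvBbar_sub_of_castHom_eq_two {j : ZMod (3 * m)} (hj : π₃ j = 2) (t : ZMod (3 * m)) :
    lvBbar m (j - t) j = (if t = 1 then 1 else 0) + (if t = -1 then 1 else 0)
      - (if t = 2 then 1 else 0) - (if t = -2 then 1 else 0) := by
  have hne : ∀ c, π₃ c ≠ π₃ t → (t = c ↔ False) :=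
    fun c h => iff_false_intro fun e => h (e ▸ rfl)
  simp only [lvBbar, sub_sub_cancel, map_sub, hj]
  obtain hc | hc | hc := (by decide : ∀ c : ZMod 3, c = 0 ∨ c = 1 ∨ c = 2) (π₃ t)
  all_goals simp +decide (disch := (simp only [hc, map_neg, map_one, map_ofNat]; decide)) only
    [hc, hne, if_true, if_false, add_zero, sub_zero]

theorem finsum_mul_lvBbar_of_castHom_eq_two {R : Type*} [CommRing R] (f : ZMod (3 * m) → R)
    {j : ZMod (3 * m)} (hj : π₃ j = 2) :
    ∑ᶠ l, f l * (lvBbar m l j : R) = f (j - 1) + f (j + 1) - f (j - 2) - f (j + 2) := by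
  rw [← finsum_comp_equiv (Equiv.subLeft j)]
  simp only [Equiv.subLeft_apply, lvBbar_sub_of_castHom_eq_two hj]
  rw [finsum_eq_sum_of_support_subset (s := {1, -1, 2, -2})]
  · simp [mul_add, mul_sub, Finset.sum_add_distrib, Finset.sum_sub_distrib]
  · intro t ht
    contrapose! ht
    simp_all

def lvMut0Int (G : ℤ → ℤ → ℚ) (u v : ℤ) : ℚ :=
  if 3 ∣ u then
    if 3 ∣ v then
      G (u - 2) (v - 2) - G (u - 2) v + G (u - 2) (v + 2)
        - G u (v - 2) + G u v - G u (v + 2)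
        + G (u + 2) (v - 2) - G (u + 2) v + G (u + 2) (v + 2)
    else -G u v + G (u - 2) v + G (u + 2) v
  else
    if 3 ∣ v then -G u v + G u (v - 2) + G u (v + 2)
    else G u v

theorem lvMut0bar_intCast (P : ZMod (3 * m) → ZMod (3 * m) → ℚ) (u v : ℤ) :
    lvMut0bar m P u v = lvMut0Int (fun a b => P a b) u v := by
  simp only [lvMut0bar, lvMut0Int, castHom_three_intCast_eq_zero_iff]
  push_cast
  rfl

end Transport

section Relations

variable {G : ℤ → ℤ → ℚ}

theorem apply_add_three_mul (periodic : ∀ u v, G (u + 3) (v + 3) = G u v) (s u v : ℤ) :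
    G (u + 3 * s) (v + 3 * s) = G u v := by
  have h : Periodic (fun s : ℤ => G (u + s) (v + s)) 3 := fun s => by
    simpa only [add_assoc] using periodic (u + s) (v + s)
  simpa [mul_comm] using h.int_mul_eq s

theorem apply_zero_three_mul_neg (skew : ∀ u v, G v u = -G u v)
    (periodic : ∀ u v, G (u + 3) (v + 3) = G u v) (d : ℤ) : G 0 (3 * -d) = -G 0 (3 * d) := by
  rw [← skew, ← apply_add_three_mul periodic (-d) (3 * d) 0]
  ring_nf

theorem apply_three_mul_add_one
    (column : ∀ u v, v % 3 = 2 → G u (v - 1) + G u (v + 1) = G u (v - 2) + G u (v + 2))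
    (u n : ℤ) : G u (3 * n + 1) = G u (3 * n) + (G u 1 - G u 0) := by
  have h : Periodic (fun n => G u (3 * n + 1) - G u (3 * n)) 1 := fun n => by
    linear_combination (norm := ring_nf) -column u (3 * n + 2) (by omega)
  have := h.int_mul_eq n
  simp only [Int.cast_id, mul_one, mul_zero, zero_add] at this
  linarith

theorem apply_three_mul_add_of_relations (skew : ∀ u v, G v u = -G u v)
    (periodic : ∀ u v, G (u + 3) (v + 3) = G u v)
    (column : ∀ u v, v % 3 = 2 → G u (v - 1) + G u (v + 1) = G u (v - 2) + G u (v + 2))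
    (mutation : ∀ u v, lvMut0Int G u v = G (u - 1) (v - 1))
    (d : ℤ) (k l : ℕ) (hk : k < 3) (hl : l < 3) :
    G k (3 * d + l) = G 0 (3 * d) + (l - k) * (G 0 1 - G 0 0) := by
  set a := G 0 1 - G 0 0
  have mutA : ∀ u v, ¬ 3 ∣ u → ¬ 3 ∣ v → G u v = G (u - 1) (v - 1) := fun u v hu hv => by
    simpa [lvMut0Int, hu, hv] using mutation u v
  have mutB : ∀ u v, 3 ∣ u → ¬ 3 ∣ v → -G u v + G (u - 2) v + G (u + 2) v = G (u - 1) (v - 1) :=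
    fun u v hu hv => by simpa [lvMut0Int, hu, hv] using mutation u v
  have odd := apply_zero_three_mul_neg skew periodic
  have shift := apply_add_three_mul periodic
  have h01 : ∀ n, G 0 (3 * n + 1) = G 0 (3 * n) + a := apply_three_mul_add_one column 0
  have h11 : ∀ n, G 1 (3 * n + 1) = G 0 (3 * n) := fun n => by
    linear_combination (norm := ring_nf) mutA 1 (3 * n + 1) (by omega) (by omega)
  have h22 : ∀ n, G 2 (3 * n + 2) = G 0 (3 * n) := fun n => by
    linear_combination (norm := ring_nf) mutA 2 (3 * n + 2) (by omega) (by omega) + h11 n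
  have h12 : ∀ n, G 1 (3 * n + 2) = G 0 (3 * n) + a := fun n => by
    linear_combination (norm := ring_nf) mutA 1 (3 * n + 2) (by omega) (by omega) + h01 n
  have h10 : ∀ n, G 1 (3 * n) = G 0 (3 * n) - a := fun n => by
    linear_combination (norm := ring_nf) skew 1 (3 * n) - shift n 0 (3 * -n + 1) - h01 (-n) - odd n
  have h21 : ∀ n, G 2 (3 * n + 1) = G 0 (3 * n) - a := fun n => by
    linear_combination (norm := ring_nf) mutA 2 (3 * n + 1) (by omega) (by omega) + h10 n
  have h20 : ∀ n, G 2 (3 * n) = G 0 (3 * n) - 2 * a := fun n => by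
    linear_combination (norm := ring_nf) -mutB 0 (3 * n - 2) (by omega) (by omega)
      - h01 (n - 1) + shift (-1) 1 (3 * n + 1) + h11 n + h21 (n - 1) - shift (-1) 2 (3 * n)
  have h02 : ∀ n, G 0 (3 * n + 2) = G 0 (3 * n) + 2 * a := fun n => by
    linear_combination (norm := ring_nf) skew 0 (3 * n + 2) - shift n 2 (3 * -n) - h20 (-n) - odd n
  interval_cases k <;> interval_cases l <;> push_cast [add_zero] <;>
    linarith [h01 d, h02 d, h10 d, h11 d, h12 d, h20 d, h21 d, h22 d]

theorem apply_add_three_of_eq_floor (R : ℤ → ℚ) (a : ℚ)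
    (hG : ∀ u v, G u v = R (v / 3 - u / 3) + (v - u) * a) (u v : ℤ) :
    G (u + 3) (v + 3) = G u v := by
  rw [hG, hG, show (v + 3) / 3 - (u + 3) / 3 = v / 3 - u / 3 by omega]
  push_cast
  ring

theorem lvMut0Int_of_eq_floor (R : ℤ → ℚ) (a : ℚ)
    (hG : ∀ u v, G u v = R (v / 3 - u / 3) + (v - u) * a) (u v : ℤ) :
    lvMut0Int G u v = G (u - 1) (v - 1) := by
  have hdvd : ∀ w : ℤ, 3 ∣ w →
      (w - 2) / 3 = w / 3 - 1 ∧ (w + 2) / 3 = w / 3 ∧ (w - 1) / 3 = w / 3 - 1 :=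
    fun w hw => by omega
  have hndvd : ∀ w : ℤ, ¬ 3 ∣ w → (w - 1) / 3 = w / 3 := fun w hw => by omega
  simp only [lvMut0Int, hG]
  split_ifs with hu hv hv
  · obtain ⟨hu₁, hu₂, hu₃⟩ := hdvd u hu
    obtain ⟨hv₁, hv₂, hv₃⟩ := hdvd v hv
    rw [hu₁, hu₂, hu₃, hv₁, hv₂, hv₃]
    push_cast
    ring_nf
  · obtain ⟨hu₁, hu₂, hu₃⟩ := hdvd u hu
    rw [hu₁, hu₂, hu₃, hndvd v hv]
    push_cast
    ring_nf
  · obtain ⟨hv₁, hv₂, hv₃⟩ := hdvd v hv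
    rw [hv₁, hv₂, hv₃, hndvd u hu]
    push_cast
    ring_nf
  · rw [hndvd u hu, hndvd v hv]
    push_cast
    ring

end Relations

section Entries

variable {m : ℕ} {P : ZMod (3 * m) → ZMod (3 * m) → ℚ}

theorem exists_entries_of_periodic_of_lvMut0bar_eq (hP : ∀ i j, P j i = -P i j)
    (hPB : ∀ i j, ∑ᶠ l, P i l * (lvBbar m l j : ℚ) = 0)
    (hper : ∀ i j, P (i + 3) (j + 3) = P i j)
    (hmut : ∀ i j, lvMut0bar m P i j = P (i - 1) (j - 1)) :
    ∃ (a₀ : ℚ) (q : ZMod m → ℚ), q 0 = 0 ∧ (∀ n, q (-n) = -q n) ∧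
      ∀ (i j : ℤ) (k l : Fin 3),
        P (((3 * i + ((k : ℕ) : ℤ) : ℤ) : ZMod (3 * m)))
          (((3 * j + ((l : ℕ) : ℤ) : ℤ) : ZMod (3 * m))) =
          q (((j - i : ℤ) : ZMod m)) + (((l : ℕ) : ℚ) - ((k : ℕ) : ℚ)) * a₀ := by
  set G : ℤ → ℤ → ℚ := fun u v => P u v
  have skew : ∀ u v, G v u = -G u v := fun u v => hP _ _
  have periodic : ∀ u v, G (u + 3) (v + 3) = G u v := fun u v => by
    simpa [G] using hper u v
  have column : ∀ u v, v % 3 = 2 → G u (v - 1) + G u (v + 1) = G u (v - 2) + G u (v + 2) := by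
    intro u v hv
    have h := finsum_mul_lvBbar_of_castHom_eq_two (P u) (castHom_three_intCast_of_emod_eq_two hv)
    rw [hPB] at h
    simp only [G]
    push_cast
    linear_combination -h
  have mutation : ∀ u v, lvMut0Int G u v = G (u - 1) (v - 1) := fun u v => by
    rw [← lvMut0bar_intCast]
    simpa [G] using hmut u v
  have hq : ∀ d : ℤ, G 0 (3 * ((d : ZMod m).cast : ℤ)) = G 0 (3 * d) := fun d => by
    simp only [G]
    rw [intCast_three_mul_eq_of_intCast_eq (ZMod.intCast_zmod_cast _)]
  refine ⟨G 0 1 - G 0 0, fun x => G 0 (3 * x.cast), ?_, fun n => ?_, fun i j k l => ?_⟩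
  · simp only [ZMod.cast_zero, mul_zero]
    linarith [skew 0 0]
  · obtain ⟨d, rfl⟩ := ZMod.intCast_surjective n
    simp only [← Int.cast_neg, hq]
    exact apply_zero_three_mul_neg skew periodic d
  · simp only [hq]
    rw [← apply_three_mul_add_of_relations skew periodic column mutation (j - i) k l k.isLt l.isLt,
      ← apply_add_three_mul periodic i]
    exact congrArg₂ G (by ring) (by ring)

theorem apply_eq_floor_of_entries {a : ℚ} {q : ZMod m → ℚ}
    (hP : ∀ (i j : ℤ) (k l : Fin 3),
        P (((3 * i + ((k : ℕ) : ℤ) : ℤ) : ZMod (3 * m)))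
          (((3 * j + ((l : ℕ) : ℤ) : ℤ) : ZMod (3 * m))) =
          q (((j - i : ℤ) : ZMod m)) + (((l : ℕ) : ℚ) - ((k : ℕ) : ℚ)) * a) (u v : ℤ) :
    P u v = (q ((v / 3 - u / 3 : ℤ) : ZMod m) - 3 * (v / 3 - u / 3 : ℤ) * a) + (v - u) * a := by
  have hmod : ∀ w : ℤ, (((w % 3).toNat : ℕ) : ℤ) = w % 3 := fun w => by omega
  have hmodℚ : ∀ w : ℤ, (((w % 3).toNat : ℕ) : ℚ) = ((w % 3 : ℤ) : ℚ) := fun w => by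
    exact_mod_cast hmod w
  have h := hP (u / 3) (v / 3) ⟨(u % 3).toNat, by omega⟩ ⟨(v % 3).toNat, by omega⟩
  simp only [hmod, hmodℚ] at h
  rw [show 3 * (u / 3) + u % 3 = u by omega, show 3 * (v / 3) + v % 3 = v by omega] at h
  rw [h, Int.emod_def u, Int.emod_def v]
  push_cast
  ring

theorem periodic_and_lvMut0bar_eq_of_entries {a : ℚ} {q : ZMod m → ℚ}
    (hP : ∀ (i j : ℤ) (k l : Fin 3),
        P (((3 * i + ((k : ℕ) : ℤ) : ℤ) : ZMod (3 * m)))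
          (((3 * j + ((l : ℕ) : ℤ) : ℤ) : ZMod (3 * m))) =
          q (((j - i : ℤ) : ZMod m)) + (((l : ℕ) : ℚ) - ((k : ℕ) : ℚ)) * a) :
    (∀ i j, P (i + 3) (j + 3) = P i j) ∧ ∀ i j, lvMut0bar m P i j = P (i - 1) (j - 1) := by
  set G : ℤ → ℤ → ℚ := fun u v => P u v
  set R : ℤ → ℚ := fun n => q n - 3 * n * a
  have floor : ∀ u v, G u v = R (v / 3 - u / 3) + (v - u) * a := apply_eq_floor_of_entries hP
  refine ⟨fun x y => ?_, fun x y => ?_⟩ <;>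
    obtain ⟨u, rfl⟩ := ZMod.intCast_surjective x <;>
    obtain ⟨v, rfl⟩ := ZMod.intCast_surjective y
  · exact_mod_cast apply_add_three_of_eq_floor (G := G) R a floor u v
  · rw [lvMut0bar_intCast]
    exact_mod_cast lvMut0Int_of_eq_floor (G := G) R a floor u v

end Entries

theorem stmt12_general (m : ℕ) (P : ZMod (3 * m) → ZMod (3 * m) → ℚ)
    (hP : ∀ i j, P j i = -P i j)
    (hPB : ∀ i j, ∑ᶠ l, P i l * (lvBbar m l j : ℚ) = 0) :
    ((∀ i j, P (i + 3) (j + 3) = P i j) ∧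
      (∀ i j, lvMut0bar m P i j = P (i - 1) (j - 1))) ↔
    ∃ (a₀ : ℚ) (q : ZMod m → ℚ), q 0 = 0 ∧ (∀ n, q (-n) = -q n) ∧
      ∀ (i j : ℤ) (k l : Fin 3),
        P (((3 * i + ((k : ℕ) : ℤ) : ℤ) : ZMod (3 * m)))
          (((3 * j + ((l : ℕ) : ℤ) : ℤ) : ZMod (3 * m))) =
          q (((j - i : ℤ) : ZMod m)) + (((l : ℕ) : ℚ) - ((k : ℕ) : ℚ)) * a₀ :=
  ⟨fun ⟨hper, hmut⟩ => exists_entries_of_periodic_of_lvMut0bar_eq hP hPB hper hmut,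
    fun ⟨_, _, _, _, hf⟩ => periodic_and_lvMut0bar_eq_of_entries hf⟩

/-- For `m > 2` and a skew-symmetric rational matrix `P̄` with `P̄ B̄ = O`, `P̄`
satisfies (a) `p_{i+3,j+3} = p_{ij}` and (b) `μ_{0̄}(P̄)_{ij} = p_{i-1,j-1}` if and
only if there are `a₀ ∈ ℚ` and `q : ℤ/mℤ → ℚ` with `q 0 = 0`, `q (-n) = -q n`, such
that `p_{3i+k,3j+l} = q (j-i) + (l-k) a₀` for all `i, j` and `k, l ∈ {0,1,2}`. -/
theorem stmt12 (m : ℕ) (hm : 2 < m) (P : ZMod (3 * m) → ZMod (3 * m) → ℚ)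
    (hP : ∀ i j, P j i = -P i j)
    (hPB : ∀ i j, ∑ᶠ l, P i l * (lvBbar m l j : ℚ) = 0) :
    ((∀ i j, P (i + 3) (j + 3) = P i j) ∧
      (∀ i j, lvMut0bar m P i j = P (i - 1) (j - 1))) ↔
    ∃ (a₀ : ℚ) (q : ZMod m → ℚ), q 0 = 0 ∧ (∀ n, q (-n) = -q n) ∧
      ∀ (i j : ℤ) (k l : Fin 3),
        P (((3 * i + ((k : ℕ) : ℤ) : ℤ) : ZMod (3 * m)))
          (((3 * j + ((l : ℕ) : ℤ) : ℤ) : ZMod (3 * m))) =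
          q (((j - i : ℤ) : ZMod m)) + (((l : ℕ) : ℚ) - ((k : ℕ) : ℚ)) * a₀ :=
  stmt12_general m P hP hPB
end

section
/- Let B=(b_{ij})_{i,j∈ℤ} be the discrete Lotka–Volterra exchange matrix, and define B'=(b'_{ij}) as the simultaneous mutation of B at all k∈3ℤ: b'_{ij}=−b_{ij} if i∈3ℤ or j∈3ℤ, and b'_{ij}=b_{ij}+Σ_{k∈3ℤ}(|b_{ik}|b_{kj}+b_{ik}|b_{kj}|)/2 otherwise (the sum has finitely many nonzero terms). Then b'_{ij}=b_{i−1,j−1} for all i,j∈ℤ. -/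
lemma lvB_r0 {a : ℤ} (h : a % 3 = 0) (b : ℤ) :
    lvB a b = (if b - a = 1 then 1 else 0) + (if b - a = -1 then 1 else 0)
      - (if b - a = 2 then 1 else 0) - (if b - a = -2 then 1 else 0) := by
  rw [lvB, if_pos h]

lemma lvB_r1 {a : ℤ} (h : a % 3 = 1) (b : ℤ) :
    lvB a b = (if b - a = 1 then 1 else 0) + (if b - a = 2 then 1 else 0)
      + (if b - a = -3 then 1 else 0) - (if b - a = -1 then 1 else 0)
      - (if b - a = -2 then 1 else 0) - (if b - a = 3 then 1 else 0) := by
  rw [lvB, if_neg (by omega), if_pos h]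

lemma lvB_r2 {a : ℤ} (h : a % 3 = 2) (b : ℤ) :
    lvB a b = -(if b - a = 1 then 1 else 0) - (if b - a = -1 then 1 else 0)
      + (if b - a = 2 then 1 else 0) + (if b - a = -2 then 1 else 0) := by
  rw [lvB, if_neg (by omega), if_neg (by omega)]

/-- Helper: cast an integer evaluation of `lvB` to a rational ite expression. -/
lemma lvB_cast_eq {a b c₁ c₂ : ℤ} {i j : ℤ}
    (h : lvB a b = (if j - i = c₁ then 1 else 0) - (if j - i = c₂ then 1 else 0)) :
    (lvB a b : ℚ) = (if j - i = c₁ then 1 else 0) - (if j - i = c₂ then 1 else 0) := by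
  rw [h]; split_ifs <;> norm_num

set_option maxHeartbeats 1600000 in
/-- The simultaneous mutation of the discrete Lotka–Volterra exchange matrix `B` at
all `k ∈ 3ℤ`: `b'_{ij} = -b_{ij}` if `i ∈ 3ℤ` or `j ∈ 3ℤ`, and
`b'_{ij} = b_{ij} + Σ_{k ∈ 3ℤ} (|b_{ik}| b_{kj} + b_{ik} |b_{kj}|)/2` otherwise
(a finite sum). The result satisfies `b'_{ij} = b_{i-1,j-1}`. -/
theorem stmt13 (i j : ℤ) :
    (if i % 3 = 0 ∨ j % 3 = 0 then -(lvB i j : ℚ)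
     else (lvB i j : ℚ) +
       ∑ᶠ k : ℤ, if k % 3 = 0 then
         (|(lvB i k : ℚ)| * (lvB k j : ℚ) + (lvB i k : ℚ) * |(lvB k j : ℚ)|) / 2
       else 0)
    = (lvB (i - 1) (j - 1) : ℚ) := by
  by_cases h : i % 3 = 0 ∨ j % 3 = 0
  · rw [if_pos h]
    have key : lvB (i - 1) (j - 1) = -(lvB i j) := by
      rcases h with h0 | h0
      · rw [lvB_r2 (by omega), lvB_r0 h0]
        simp only [sub_sub_sub_cancel_right]
        split_ifs <;> omega
      · have hi : i % 3 = 0 ∨ i % 3 = 1 ∨ i % 3 = 2 := by omega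
        rcases hi with hi | hi | hi
        · rw [lvB_r2 (by omega), lvB_r0 hi]
          simp only [sub_sub_sub_cancel_right]
          split_ifs <;> omega
        · rw [lvB_r0 (by omega), lvB_r1 hi]
          simp only [sub_sub_sub_cancel_right]
          split_ifs <;> omega
        · rw [lvB_r1 (by omega), lvB_r2 hi]
          simp only [sub_sub_sub_cancel_right]
          split_ifs <;> omega
    rw [key]
    push_cast
    ring
  · rw [if_neg h]
    push_neg at h
    obtain ⟨hi, hj⟩ := h
    rw [finsum_eq_finset_sum_of_support_subset _
      (s := ({i - 2, i - 1, i + 1, i + 2} : Finset ℤ)) ?_]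
    · rw [Finset.sum_insert (by simp only [Finset.mem_insert, Finset.mem_singleton]; omega),
        Finset.sum_insert (by simp only [Finset.mem_insert, Finset.mem_singleton]; omega),
        Finset.sum_insert (by simp only [Finset.mem_singleton]; omega),
        Finset.sum_singleton]
      have hi12 : i % 3 = 1 ∨ i % 3 = 2 := by omega
      have hj12 : j % 3 = 1 ∨ j % 3 = 2 := by omega
      rcases hi12 with hi1 | hi2
      · -- surviving terms: k = i-1 and k = i+2
        rw [if_neg (by omega : ¬ (i - 2) % 3 = 0), if_neg (by omega : ¬ (i + 1) % 3 = 0),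
          if_pos (by omega : (i - 1) % 3 = 0), if_pos (by omega : (i + 2) % 3 = 0)]
        have e1 : lvB i (i - 1) = -1 := by
          rw [lvB_r1 hi1]; split_ifs <;> omega
        have e2 : lvB i (i + 2) = 1 := by
          rw [lvB_r1 hi1]; split_ifs <;> omega
        rw [e1, e2]
        rcases hj12 with hj1 | hj2
        · have hb : (lvB i j : ℚ) =
              (if j - i = -3 then 1 else 0) - (if j - i = 3 then 1 else 0) :=
            lvB_cast_eq (by rw [lvB_r1 hi1]; split_ifs <;> omega)
          have hx : (lvB (i - 1) j : ℚ) =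
              (if j - i = 0 then 1 else 0) - (if j - i = -3 then 1 else 0) :=
            lvB_cast_eq (by rw [lvB_r0 (by omega)]; split_ifs <;> omega)
          have hy : (lvB (i + 2) j : ℚ) =
              (if j - i = 3 then 1 else 0) - (if j - i = 0 then 1 else 0) :=
            lvB_cast_eq (by rw [lvB_r0 (by omega)]; split_ifs <;> omega)
          have hr : (lvB (i - 1) (j - 1) : ℚ) = 0 := by
            have hz : lvB (i - 1) (j - 1) = 0 := by
              rw [lvB_r0 (by omega)]
              simp only [sub_sub_sub_cancel_right]
              split_ifs <;> omega
            exact_mod_cast hz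
          rw [hb, hx, hy, hr]
          push_cast
          split_ifs <;> first | omega | norm_num
        · have hb : (lvB i j : ℚ) =
              (if j - i = 1 then 1 else 0) - (if j - i = -2 then 1 else 0) :=
            lvB_cast_eq (by rw [lvB_r1 hi1]; split_ifs <;> omega)
          have hx : (lvB (i - 1) j : ℚ) =
              (if j - i = -2 then 1 else 0) - (if j - i = 1 then 1 else 0) :=
            lvB_cast_eq (by rw [lvB_r0 (by omega)]; split_ifs <;> omega)
          have hy : (lvB (i + 2) j : ℚ) =
              (if j - i = 1 then 1 else 0) - (if j - i = 4 then 1 else 0) :=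
            lvB_cast_eq (by rw [lvB_r0 (by omega)]; split_ifs <;> omega)
          have hr : (lvB (i - 1) (j - 1) : ℚ) =
              (if j - i = 1 then 1 else 0) - (if j - i = -2 then 1 else 0) :=
            lvB_cast_eq (by
              rw [lvB_r0 (by omega)]
              simp only [sub_sub_sub_cancel_right]
              split_ifs <;> omega)
          rw [hb, hx, hy, hr]
          push_cast
          split_ifs <;> first | omega | norm_num
      · -- surviving terms: k = i+1 and k = i-2
        rw [if_neg (by omega : ¬ (i - 1) % 3 = 0), if_neg (by omega : ¬ (i + 2) % 3 = 0),
          if_pos (by omega : (i + 1) % 3 = 0), if_pos (by omega : (i - 2) % 3 = 0)]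
        have e1 : lvB i (i + 1) = -1 := by
          rw [lvB_r2 hi2]; split_ifs <;> omega
        have e2 : lvB i (i - 2) = 1 := by
          rw [lvB_r2 hi2]; split_ifs <;> omega
        rw [e1, e2]
        rcases hj12 with hj1 | hj2
        · have hb : (lvB i j : ℚ) =
              (if j - i = 2 then 1 else 0) - (if j - i = -1 then 1 else 0) :=
            lvB_cast_eq (by rw [lvB_r2 hi2]; split_ifs <;> omega)
          have hx : (lvB (i + 1) j : ℚ) =
              (if j - i = 2 then 1 else 0) - (if j - i = -1 then 1 else 0) :=
            lvB_cast_eq (by rw [lvB_r0 (by omega)]; split_ifs <;> omega)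
          have hy : (lvB (i - 2) j : ℚ) =
              (if j - i = -1 then 1 else 0) - (if j - i = -4 then 1 else 0) :=
            lvB_cast_eq (by rw [lvB_r0 (by omega)]; split_ifs <;> omega)
          have hr : (lvB (i - 1) (j - 1) : ℚ) =
              (if j - i = 2 then 1 else 0) - (if j - i = -1 then 1 else 0) :=
            lvB_cast_eq (by
              rw [lvB_r1 (by omega)]
              simp only [sub_sub_sub_cancel_right]
              split_ifs <;> omega)
          rw [hb, hx, hy, hr]
          push_cast
          split_ifs <;> first | omega | norm_num
        · have hb : (lvB i j : ℚ) = 0 := by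
            have hz : lvB i j = 0 := by
              rw [lvB_r2 hi2]; split_ifs <;> omega
            exact_mod_cast hz
          have hx : (lvB (i + 1) j : ℚ) =
              (if j - i = 0 then 1 else 0) - (if j - i = 3 then 1 else 0) :=
            lvB_cast_eq (by rw [lvB_r0 (by omega)]; split_ifs <;> omega)
          have hy : (lvB (i - 2) j : ℚ) =
              (if j - i = -3 then 1 else 0) - (if j - i = 0 then 1 else 0) :=
            lvB_cast_eq (by rw [lvB_r0 (by omega)]; split_ifs <;> omega)
          have hr : (lvB (i - 1) (j - 1) : ℚ) =
              (if j - i = -3 then 1 else 0) - (if j - i = 3 then 1 else 0) :=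
            lvB_cast_eq (by
              rw [lvB_r1 (by omega)]
              simp only [sub_sub_sub_cancel_right]
              split_ifs <;> omega)
          rw [hb, hx, hy, hr]
          push_cast
          split_ifs <;> first | omega | norm_num
    · intro k hk
      simp only [Function.mem_support] at hk
      simp only [Finset.coe_insert, Set.mem_insert_iff, Finset.coe_singleton,
        Set.mem_singleton_iff]
      by_contra hks
      push_neg at hks
      obtain ⟨h1, h2, h3, h4⟩ := hks
      apply hk
      by_cases hk0 : k % 3 = 0
      · have hz : lvB i k = 0 := by
          rw [lvB]
          split_ifs <;> omega
        rw [if_pos hk0, hz]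
        norm_num
      · rw [if_neg hk0]
end

section
/- Define s:ℤ→ℚ by s(n)=0 if n is even, s(n)=1 if n≡1 (mod 4), and s(n)=−1 if n≡3 (mod 4). Let B=(b_{ij})_{i,j∈ℤ} with b_{ij}=(−1)^i(δ_{i,j+1}+δ_{i,j−1}), let M=(m_{ij})_{i,j∈ℤ} with m_{ij}=s(j−i) if either (i is even and j<i) or (i is odd and j>i), and m_{ij}=0 otherwise, and let R=(r_{ij})_{i,j∈ℤ} with r_{ij}=s(j−i). Then MB=𝕀 and RB=O; explicitly, for all i,j∈ℤ: m_{i,j−1}·b_{j−1,j} + m_{i,j+1}·b_{j+1,j} = δ_{ij} and r_{i,j−1}·b_{j−1,j} + r_{i,j+1}·b_{j+1,j} = 0 (these are the only nonzero terms in the entrywise products, since column j of B is supported on rows j±1). -/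
/-- `s(n) = sin(nπ/2)`: `0` if `n` is even, `1` if `n ≡ 1 (mod 4)`, `-1` if
`n ≡ 3 (mod 4)`. -/
def sFun (n : ℤ) : ℚ := if n % 2 = 0 then 0 else if n % 4 = 1 then 1 else -1

/-- The exchange matrix `b_{ij} = (-1)^i (δ_{i,j+1} + δ_{i,j-1})` of the infinite
quiver of Example 3.9. -/
def exB (i j : ℤ) : ℚ :=
  (-1 : ℚ) ^ i * ((if i = j + 1 then 1 else 0) + (if i = j - 1 then 1 else 0))

/-- The left inverse `M`: `m_{ij} = s(j-i)` if (`i` even and `j < i`) or (`i` odd and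
`j > i`), and `m_{ij} = 0` otherwise. -/
def exM (i j : ℤ) : ℚ :=
  if (i % 2 = 0 ∧ j < i) ∨ (i % 2 ≠ 0 ∧ i < j) then sFun (j - i) else 0

/-- The matrix `R`: `r_{ij} = s(j-i)`. -/
def exR (i j : ℤ) : ℚ := sFun (j - i)

lemma negOne_zpow (k : ℤ) : (-1 : ℚ) ^ k = if k % 2 = 0 then 1 else -1 := by
  rcases Int.even_or_odd k with h | h
  · rw [h.neg_one_zpow, if_pos (by obtain ⟨m, hm⟩ := h; omega)]
  · rw [h.neg_one_zpow, if_neg (by obtain ⟨m, hm⟩ := h; omega)]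

lemma exB_left (j : ℤ) : exB (j - 1) j = (-1 : ℚ) ^ (j - 1) := by
  rw [exB, if_neg (by omega), if_pos rfl]; ring

lemma exB_right (j : ℤ) : exB (j + 1) j = (-1 : ℚ) ^ (j - 1) := by
  rw [exB, if_pos rfl, if_neg (by omega), negOne_zpow, negOne_zpow]
  split_ifs <;> first | (exfalso; omega) | norm_num

lemma keyM (i j : ℤ) :
    exM i (j - 1) + exM i (j + 1) = if i = j then (-1 : ℚ) ^ (j - 1) else 0 := by
  rw [negOne_zpow]
  simp only [exM, sFun]
  split_ifs <;> first | (exfalso; omega) | norm_num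

lemma keyR (i j : ℤ) : exR i (j - 1) + exR i (j + 1) = 0 := by
  simp only [exR, sFun]
  split_ifs <;> first | (exfalso; omega) | norm_num

lemma exB_zero {l j : ℤ} (h1 : l ≠ j + 1) (h2 : l ≠ j - 1) : exB l j = 0 := by
  rw [exB, if_neg h1, if_neg h2]; ring

lemma sq_negOne (j : ℤ) : (-1 : ℚ) ^ (j - 1) * (-1 : ℚ) ^ (j - 1) = 1 := by
  rw [negOne_zpow]; split_ifs <;> norm_num

/-- `MB = 𝕀` and `RB = O`: entrywise, since column `j` of `B` is supported on rows
`j ± 1`, `m_{i,j-1} b_{j-1,j} + m_{i,j+1} b_{j+1,j} = δ_{ij}` and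
`r_{i,j-1} b_{j-1,j} + r_{i,j+1} b_{j+1,j} = 0`. -/
theorem stmt17 :
    (∀ i j : ℤ, ∑ᶠ l, exM i l * exB l j = if i = j then 1 else 0) ∧
    (∀ i j : ℤ, ∑ᶠ l, exR i l * exB l j = 0) ∧
    (∀ i j : ℤ, exM i (j - 1) * exB (j - 1) j + exM i (j + 1) * exB (j + 1) j =
      if i = j then 1 else 0) ∧
    (∀ i j : ℤ, exR i (j - 1) * exB (j - 1) j + exR i (j + 1) * exB (j + 1) j = 0) := by
  have h3 : ∀ i j : ℤ, exM i (j - 1) * exB (j - 1) j + exM i (j + 1) * exB (j + 1) j =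
      if i = j then 1 else 0 := by
    intro i j
    rw [exB_left, exB_right, ← add_mul, keyM]
    split_ifs
    · exact sq_negOne j
    · ring
  have h4 : ∀ i j : ℤ, exR i (j - 1) * exB (j - 1) j + exR i (j + 1) * exB (j + 1) j = 0 := by
    intro i j
    rw [exB_left, exB_right, ← add_mul, keyR, zero_mul]
  have hsum : ∀ (f : ℤ → ℚ) (j : ℤ),
      (∑ᶠ l, f l * exB l j) = f (j - 1) * exB (j - 1) j + f (j + 1) * exB (j + 1) j := by
    intro f j
    have hsub : (Function.support fun l => f l * exB l j) ⊆ ({j - 1, j + 1} : Finset ℤ) := by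
      intro l hl
      simp only [Function.mem_support] at hl
      simp only [Finset.coe_insert, Finset.coe_singleton, Set.mem_insert_iff,
        Set.mem_singleton_iff]
      by_contra hc
      push_neg at hc
      exact hl (by rw [exB_zero hc.2 hc.1, mul_zero])
    rw [finsum_eq_finset_sum_of_support_subset _ hsub,
      Finset.sum_pair (by omega : j - 1 ≠ j + 1)]
  exact ⟨fun i j => by rw [hsum, h3], fun i j => by rw [hsum, h4], h3, h4⟩
end
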